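/- The inverse Motzkin matrix entries satisfy the recurrence (i−j)·m_{i,j} = −ω·i·m_{i−1,j} − (i+j)·m_{i−2,j} for 0 ≤ j ≤ i−1, with initial values m_{i,j} = δ_{i,j} for j ≥ i. -/

import Mathlib

open scoped BigOperators

/-- Inverse Motzkin matrix entries: m i j is the coefficient of t^i in
t^j * (1 + ω t + t^2)⁻¹ ^ (j+1). -/
noncomputable def minv (ω : ℚ) (i j : ℕ) : ℚ :=
  PowerSeries.coeff i ((PowerSeries.X : PowerSeries ℚ) ^ j *
    ((1 + PowerSeries.C ω * PowerSeries.X + PowerSeries.X ^ 2)⁻¹) ^ (j + 1))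

/-- Extension of minv to integer row index, vanishing for negative rows. -/
noncomputable def minvZ (ω : ℚ) (i : ℤ) (j : ℕ) : ℚ :=
  if 0 ≤ i then minv ω i.toNat j else 0

/-!
With `P = 1 + ωX + X²`, the `j`-th column of the inverse Motzkin matrix has generating function
`g = X^j P^{-(j+1)}`, which solves the first-order equation `P · X g' = (j P - (j+1) X P') g`.
The Euler operator `X d/dX` acts on the coefficient of `X^i` as multiplication by `i`, so comparing
coefficients of `X^i` in this equation gives the three-term recurrence.
-/

open PowerSeries

namespace PowerSeries

section CommRing

variable {R : Type*} [CommRing R]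

theorem coeff_X_mul_derivative (f : R⟦X⟧) (n : ℕ) :
    coeff n (X * d⁄dX R f) = n * coeff n f := by
  cases n with
  | zero => simp [coeff_zero_eq_constantCoeff]
  | succ n => rw [coeff_succ_X_mul, coeff_derivative]; push_cast; ring

theorem coeff_X_pow_mul_X_mul_derivative (f : R⟦X⟧) (k n : ℕ) :
    coeff n (X ^ k * (X * d⁄dX R f)) = ((n : R) - k) * coeff n (X ^ k * f) := by
  rw [coeff_X_pow_mul', coeff_X_pow_mul']
  split_ifs with hk
  · rw [coeff_X_mul_derivative, Nat.cast_sub hk]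
  · rw [mul_zero]

theorem X_mul_derivative_X_pow (n : ℕ) : X * d⁄dX R (X ^ n : R⟦X⟧) = (n : R⟦X⟧) * X ^ n := by
  cases n with
  | zero => simp
  | succ n => rw [derivative_pow, derivative_X]; push_cast; ring

theorem coeff_X_pow_mul_of_le (f : R⟦X⟧) {i j : ℕ} (h : i ≤ j) :
    coeff i (X ^ j * f) = if i = j then constantCoeff f else 0 := by
  rw [coeff_X_pow_mul']
  rcases h.eq_or_lt with rfl | hlt
  · simp [coeff_zero_eq_constantCoeff]
  · rw [if_neg hlt.not_ge, if_neg hlt.ne]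

end CommRing

theorem mul_X_mul_derivative_X_pow_mul_inv_pow {K : Type*} [Field K] {P : K⟦X⟧}
    (hP : constantCoeff P ≠ 0) (j : ℕ) :
    P * (X * d⁄dX K (X ^ j * P⁻¹ ^ (j + 1))) =
      ((j : K⟦X⟧) * P - ((j : K⟦X⟧) + 1) * X * d⁄dX K P) * (X ^ j * P⁻¹ ^ (j + 1)) := by
  have hPinv := PowerSeries.mul_inv_cancel P hP
  rw [Derivation.leibniz, derivative_pow, derivative_inv', smul_eq_mul, smul_eq_mul,
    Nat.add_sub_cancel, Nat.cast_succ]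
  linear_combination (P * P⁻¹ ^ (j + 1)) * X_mul_derivative_X_pow (R := K) j
    - ((j : K⟦X⟧) + 1) * X * d⁄dX K P * X ^ j * P⁻¹ ^ (j + 1) * hPinv

end PowerSeries

noncomputable def motzkinInvColumn {K : Type*} [Field K] (ω : K) (j : ℕ) : K⟦X⟧ :=
  X ^ j * (1 + C ω * X + X ^ 2)⁻¹ ^ (j + 1)

theorem coeff_motzkinInvColumn_recurrence {K : Type*} [Field K] (ω : K) (j n : ℕ) :
    ((n : K) - j) * coeff n (motzkinInvColumn ω j) =
      -ω * n * coeff n (X * motzkinInvColumn ω j) -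
        ((n : K) + j) * coeff n (X ^ 2 * motzkinInvColumn ω j) := by
  set g := motzkinInvColumn ω j
  have hP : constantCoeff (1 + C ω * X + X ^ 2 : K⟦X⟧) ≠ 0 := by simp
  have hP' : d⁄dX K (1 + C ω * X + X ^ 2 : K⟦X⟧) = C ω + 2 * X := by simp
  have hode : (1 + C ω * X + X ^ 2) * (X * d⁄dX K g) =
      ((j : K⟦X⟧) * (1 + C ω * X + X ^ 2) - ((j : K⟦X⟧) + 1) * X * (C ω + 2 * X)) * g := by
    rw [← hP']
    exact mul_X_mul_derivative_X_pow_mul_inv_pow hP j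
  -- `X ^ 1` keeps the shape of `coeff_X_pow_mul_X_mul_derivative`
  have hexpand : X * d⁄dX K g + C ω * (X ^ 1 * (X * d⁄dX K g)) + X ^ 2 * (X * d⁄dX K g) =
      C (j : K) * g - C ω * (X ^ 1 * g) - C ((j : K) + 2) * (X ^ 2 * g) := by
    simp only [map_add, map_natCast, map_ofNat]
    linear_combination hode
  have hcoeff := congrArg (coeff n) hexpand
  simp only [map_add (coeff n), map_sub (coeff n), coeff_C_mul, coeff_X_mul_derivative,
    coeff_X_pow_mul_X_mul_derivative] at hcoeff
  rw [pow_one] at hcoeff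
  linear_combination hcoeff

theorem minv_eq_coeff (ω : ℚ) (i j : ℕ) : minv ω i j = coeff i (motzkinInvColumn ω j) := rfl

theorem minv_sub_one_eq_coeff (ω : ℚ) {i : ℕ} (hi : 1 ≤ i) (j : ℕ) :
    minv ω (i - 1) j = coeff i (X * motzkinInvColumn ω j) := by
  rw [← pow_one X, coeff_X_pow_mul', if_pos hi, minv_eq_coeff]

theorem minvZ_natCast_sub_eq_coeff (ω : ℚ) (i k j : ℕ) :
    minvZ ω ((i : ℤ) - k) j = coeff i (X ^ k * motzkinInvColumn ω j) := by
  rw [minvZ, coeff_X_pow_mul']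
  split_ifs with h₁ h₂ h₂
  · rw [minv_eq_coeff]; congr; omega
  · omega
  · omega
  · rfl

theorem minv_of_le (ω : ℚ) {i j : ℕ} (h : i ≤ j) : minv ω i j = if i = j then 1 else 0 := by
  rw [minv_eq_coeff, motzkinInvColumn, coeff_X_pow_mul_of_le _ h]
  simp

theorem minv_recurrence (ω : ℚ) :
    (∀ i j : ℕ, j + 1 ≤ i →
      ((i : ℚ) - j) * minv ω i j =
        -ω * i * minv ω (i-1) j - ((i : ℚ) + j) * minvZ ω ((i : ℤ) - 2) j) ∧
    (∀ i j : ℕ, i ≤ j → minv ω i j = if i = j then 1 else 0) := by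
  refine ⟨fun i j hij => ?_, fun i j => minv_of_le ω⟩
  have hZ : minvZ ω ((i : ℤ) - 2) j = coeff i (X ^ 2 * motzkinInvColumn ω j) := by
    exact_mod_cast minvZ_natCast_sub_eq_coeff ω i 2 j
  rw [minv_sub_one_eq_coeff ω (by omega) j, hZ]
  exact coeff_motzkinInvColumn_recurrence ω j i
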